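/- For α > −1 one has s̃(−∞) := lim_{x→−∞} s̃(x) = −∞ if and only if α ≥ 1. -/

import Mathlib

/-!
Write `f y = 2 (|y|^α + y)`, so that `ρ̃ x = exp (∫_x^c f)` and `s̃ x = -∫_x^c ρ̃`. If `α ≥ 1`
then `f ≥ 0` on `(-∞, -1]`, so `ρ̃` is bounded below by a positive constant near `-∞` and
`s̃ x → -∞`. If `α < 1` then `f y → -∞` as `y → -∞`, so eventually `f ≤ -1`, `ρ̃` decays at least
like `eˣ`, and `s̃` converges to the finite limit `-∫_{-∞}^c ρ̃`.
-/

open MeasureTheory Set Filter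

lemma intervalIntegrable_abs_rpow {α : ℝ} (hα : -1 < α) (a b : ℝ) :
    IntervalIntegrable (fun x : ℝ => |x| ^ α) volume a b := by
  suffices h : ∀ b : ℝ, 0 ≤ b → IntervalIntegrable (fun x : ℝ => |x| ^ α) volume 0 b by
    have h' : ∀ b : ℝ, IntervalIntegrable (fun x : ℝ => |x| ^ α) volume 0 b := by
      intro b
      rcases le_total 0 b with hb | hb
      · exact h b hb
      · rw [IntervalIntegrable.iff_comp_neg]
        simpa only [abs_neg, neg_zero] using h (-b) (by linarith)
    exact (h' a).symm.trans (h' b)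
  intro b hb
  have h0 := intervalIntegral.intervalIntegrable_rpow' (a := 0) (b := b) hα
  rw [intervalIntegrable_iff, uIoc_of_le hb] at h0 ⊢
  exact h0.congr_fun (fun x hx => by rw [abs_of_pos hx.1]) measurableSet_Ioc

lemma tendsto_rpow_sub_self_atTop {α : ℝ} (hα : α < 1) :
    Tendsto (fun t : ℝ => t ^ α - t) atTop atBot := by
  have h : Tendsto (fun t : ℝ => t * (t ^ (α - 1) - 1)) atTop atBot := by
    refine tendsto_id.atTop_mul_neg (C := -1) (by norm_num) ?_
    have := (tendsto_rpow_neg_atTop (y := 1 - α) (by linarith)).sub_const 1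
    simpa using this
  refine h.congr' ?_
  filter_upwards [eventually_gt_atTop 0] with t ht
  rw [Real.rpow_sub_one ht.ne', mul_sub, mul_div_cancel₀ _ ht.ne', mul_one]

lemma tendsto_abs_rpow_add_self_atBot {α : ℝ} (hα : α < 1) :
    Tendsto (fun y : ℝ => |y| ^ α + y) atBot atBot := by
  refine ((tendsto_rpow_sub_self_atTop hα).comp tendsto_neg_atBot_atTop).congr' ?_
  filter_upwards [eventually_le_atBot 0] with y hy
  simp [abs_of_nonpos hy, sub_eq_add_neg]

lemma abs_rpow_add_self_nonneg {α y : ℝ} (hα : 1 ≤ α) (hy : y ≤ -1) : 0 ≤ |y| ^ α + y := by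
  rw [abs_of_neg (by linarith : y < 0)]
  linarith [Real.self_le_rpow_of_one_le (by linarith : 1 ≤ -y) hα]

section IntervalIntegral

variable {ρ : ℝ → ℝ}

lemma tendsto_intervalIntegral_atBot_atBot (hρ : ∀ a b, IntervalIntegrable ρ volume a b)
    {δ : ℝ} (hδ : 0 < δ) (h : ∀ᶠ x in atBot, δ ≤ ρ x) (c : ℝ) :
    Tendsto (fun x => ∫ y in c..x, ρ y) atBot atBot := by
  obtain ⟨d, hd⟩ := eventually_atBot.1 h
  have hlin : Tendsto (fun x => (∫ y in c..d, ρ y) - δ * d + δ * x) atBot atBot :=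
    tendsto_atBot_add_const_left _ _ (tendsto_id.const_mul_atBot hδ)
  refine tendsto_atBot_mono' _ ?_ hlin
  filter_upwards [eventually_le_atBot d] with x hx
  have hmass : δ * (d - x) ≤ ∫ y in x..d, ρ y := by
    have := intervalIntegral.integral_mono_on hx intervalIntegrable_const (hρ x d)
      fun y hy => hd y hy.2
    rwa [intervalIntegral.integral_const, smul_eq_mul, mul_comm] at this
  rw [← intervalIntegral.integral_add_adjacent_intervals (hρ c d) (hρ d x),
    intervalIntegral.integral_symm x d]
  linarith

lemma not_tendsto_intervalIntegral_atBot_atBot {c : ℝ} (h : IntegrableOn ρ (Iic c)) :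
    ¬Tendsto (fun x => ∫ y in c..x, ρ y) atBot atBot :=
  not_tendsto_atBot_of_tendsto_nhds <|
    (intervalIntegral_tendsto_integral_Iic c h tendsto_id).neg.congr fun x =>
      (intervalIntegral.integral_symm x c).symm

end IntervalIntegral

noncomputable def scaleDensity (f : ℝ → ℝ) (c x : ℝ) : ℝ :=
  Real.exp (-∫ y in c..x, f y)

namespace scaleDensity

variable {f : ℝ → ℝ} {c : ℝ}

lemma pos (x : ℝ) : 0 < scaleDensity f c x := Real.exp_pos _

lemma continuous (hf : ∀ a b, IntervalIntegrable f volume a b) : Continuous (scaleDensity f c) :=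
  Real.continuous_exp.comp (intervalIntegral.continuous_primitive hf c).neg

lemma eq_exp_mul (hf : ∀ a b, IntervalIntegrable f volume a b) (x d : ℝ) :
    scaleDensity f c x = Real.exp (∫ y in x..d, f y) * scaleDensity f c d := by
  rw [scaleDensity, scaleDensity, ← Real.exp_add,
    ← intervalIntegral.integral_add_adjacent_intervals (hf c d) (hf d x),
    intervalIntegral.integral_symm x d]
  ring_nf

lemma eventually_const_le (hf : ∀ a b, IntervalIntegrable f volume a b)
    (h : ∀ᶠ y in atBot, 0 ≤ f y) :
    ∃ δ > 0, ∀ᶠ x in atBot, δ ≤ scaleDensity f c x := by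
  obtain ⟨d, hd⟩ := eventually_atBot.1 h
  refine ⟨scaleDensity f c d, pos d, ?_⟩
  filter_upwards [eventually_le_atBot d] with x hx
  have hint : 0 ≤ ∫ y in x..d, f y := intervalIntegral.integral_nonneg hx fun y hy => hd y hy.2
  rw [eq_exp_mul hf x d]
  exact le_mul_of_one_le_left (pos d).le (Real.one_le_exp hint)

lemma integrableOn_Iic (hf : ∀ a b, IntervalIntegrable f volume a b)
    (h : ∀ᶠ y in atBot, f y ≤ -1) (b : ℝ) :
    IntegrableOn (scaleDensity f c) (Iic b) := by
  obtain ⟨d₀, hd₀⟩ := eventually_atBot.1 h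
  set d := min d₀ b
  have hbound : ∀ x ≤ d,
      scaleDensity f c x ≤ scaleDensity f c d * Real.exp (-d) * Real.exp x := by
    intro x hx
    have hint : ∫ y in x..d, f y ≤ x - d := by
      have := intervalIntegral.integral_mono_on hx (hf x d) intervalIntegrable_const
        fun y hy => hd₀ y (hy.2.trans (min_le_left _ _))
      rw [intervalIntegral.integral_const, smul_eq_mul] at this
      linarith
    calc scaleDensity f c x = Real.exp (∫ y in x..d, f y) * scaleDensity f c d :=
          eq_exp_mul hf x d
      _ ≤ Real.exp (x - d) * scaleDensity f c d := by gcongr; exact (pos d).le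
      _ = scaleDensity f c d * Real.exp (-d) * Real.exp x := by
        rw [sub_eq_add_neg, Real.exp_add]; ring
  have htail : IntegrableOn (scaleDensity f c) (Iic d) :=
    ((integrableOn_exp_Iic d).const_mul _).mono' (continuous hf).aestronglyMeasurable
      (ae_restrict_of_forall_mem measurableSet_Iic fun x hx => by
        rw [Real.norm_of_nonneg (pos x).le]; exact hbound x hx)
  have hmid : IntegrableOn (scaleDensity f c) (Icc d b) := (continuous hf).integrableOn_Icc
  rw [← Iic_union_Icc_eq_Iic (show d ≤ b from min_le_right _ _)]
  exact htail.union hmid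

end scaleDensity

/-- **Example (SDE `dY = |Y|^α dt + dW`): `s̃(-∞) = -∞` iff `α ≥ 1`.**  For `α > -1` and
`c ∈ ℝ`, with `ρ̃(x) = exp(-∫_c^x 2(|y|^α + y) dy)` and `s̃(x) = ∫_c^x ρ̃(y) dy`, one has
`s̃(-∞) = lim_{x → -∞} s̃(x) = -∞` (i.e. `s̃ → -∞` at `-∞`) if and only if `α ≥ 1`. -/
theorem example_power_drift_st_bot_iff
    (α : ℝ) (hα : -1 < α) (c : ℝ)
    (ρt st : ℝ → ℝ)
    (hρt : ∀ x : ℝ, ρt x = Real.exp (-(∫ y in c..x, 2 * (|y| ^ α + y))))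
    (hst : ∀ x : ℝ, st x = ∫ y in c..x, ρt y) :
    Tendsto st atBot atBot ↔ 1 ≤ α := by
  set f : ℝ → ℝ := fun y => 2 * (|y| ^ α + y)
  have hf : ∀ a b, IntervalIntegrable f volume a b := fun a b =>
    ((intervalIntegrable_abs_rpow hα a b).add (continuous_id.intervalIntegrable a b)).const_mul 2
  obtain rfl : ρt = scaleDensity f c := funext hρt
  obtain rfl : st = fun x => ∫ y in c..x, scaleDensity f c y := funext hst
  constructor
  · intro htends
    by_contra! hα1
    have hneg : ∀ᶠ y in atBot, f y ≤ -1 :=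
      ((tendsto_abs_rpow_add_self_atBot hα1).const_mul_atBot two_pos).eventually_le_atBot (-1)
    exact not_tendsto_intervalIntegral_atBot_atBot
      (scaleDensity.integrableOn_Iic hf hneg c) htends
  · intro hα1
    have hnonneg : ∀ᶠ y in atBot, 0 ≤ f y := by
      filter_upwards [eventually_le_atBot (-1)] with y hy
      exact mul_nonneg two_pos.le (abs_rpow_add_self_nonneg hα1 hy)
    obtain ⟨δ, hδ, hρδ⟩ := scaleDensity.eventually_const_le hf (c := c) hnonneg
    exact tendsto_intervalIntegral_atBot_atBot
      (fun a b => (scaleDensity.continuous hf).intervalIntegrable a b) hδ hρδ c
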